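/- arXiv:math/0612766 — 2 statements merged into one kernel-verified Lean document; each statement's English description precedes it below -/
import Mathlib

section
/- (Lawson-type correspondence on the level of fundamental data.) Let κ₁, τ₁ be real constants with κ₁ − 4τ₁² ≠ 0 and let (λ, u, H₁, p, A) be a fundamental data set on an open set Ω ⊆ ℂ for (κ₁, τ₁) in which H₁ is constant. Let κ₂, τ₂, H₂, α be real numbers with κ₂ − 4τ₂² = κ₁ − 4τ₁² and e^{−iα}·(H₁ − iτ₁) = H₂ − iτ₂. Then (λ, u, H₂, e^{iα}·p, e^{iα}·A) is a fundamental data set on Ω for (κ₂, τ₂). -/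
open Complex

/-- Wirtinger derivative `∂f/∂z = (f_s - i f_t)/2`. -/
noncomputable def wdz (f : ℂ → ℂ) (z : ℂ) : ℂ :=
  (fderiv ℝ f z 1 - Complex.I * fderiv ℝ f z Complex.I) / 2

/-- Wirtinger derivative `∂f/∂z̄ = (f_s + i f_t)/2`. -/
noncomputable def wdzbar (f : ℂ → ℂ) (z : ℂ) : ℂ :=
  (fderiv ℝ f z 1 + Complex.I * fderiv ℝ f z Complex.I) / 2

/-- A fundamental data set `(λ, u, H, p, A)` on `Ω` for the pair `(κ, τ)`:
smooth functions `lam, u, H : Ω → ℝ` with `lam > 0`, and `p, A : Ω → ℂ`,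
satisfying the integrability equations (C.1)–(C.4). -/
structure IsFundData (κ τ : ℝ) (Ω : Set ℂ) (lam u H : ℂ → ℝ) (p A : ℂ → ℂ) : Prop where
  smooth_lam : ContDiffOn ℝ (⊤ : ℕ∞) lam Ω
  smooth_u : ContDiffOn ℝ (⊤ : ℕ∞) u Ω
  smooth_H : ContDiffOn ℝ (⊤ : ℕ∞) H Ω
  smooth_p : ContDiffOn ℝ (⊤ : ℕ∞) p Ω
  smooth_A : ContDiffOn ℝ (⊤ : ℕ∞) A Ω
  lam_pos : ∀ z ∈ Ω, 0 < lam z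
  c1 : ∀ z ∈ Ω, wdzbar p z =
    ((lam z : ℂ) / 2) * (wdz (fun w => (H w : ℂ)) z + (u z : ℂ) * A z * ((κ : ℂ) - 4 * (τ : ℂ) ^ 2))
  c2 : ∀ z ∈ Ω, wdzbar A z = ((u z : ℂ) * (lam z : ℂ) / 2) * ((H z : ℂ) + Complex.I * (τ : ℂ))
  c3 : ∀ z ∈ Ω, wdz (fun w => (u w : ℂ)) z =
    -((H z : ℂ) - Complex.I * (τ : ℂ)) * A z - (2 * p z / (lam z : ℂ)) * (starRingEnd ℂ) (A z)
  c4 : ∀ z ∈ Ω, 4 * (‖A z‖) ^ 2 / lam z = 1 - (u z) ^ 2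


lemma wdz_const (c : ℂ) (z : ℂ) : wdz (fun _ => c) z = 0 := by
  simp [wdz]

lemma wdzbar_const_mul (c : ℂ) (f : ℂ → ℂ) (z : ℂ) (hf : DifferentiableAt ℝ f z) :
    wdzbar (fun w => c * f w) z = c * wdzbar f z := by
  rw [wdzbar, wdzbar, fderiv_const_mul hf]
  simp
  ring

lemma wdz_const_mul (c : ℂ) (f : ℂ → ℂ) (z : ℂ) (hf : DifferentiableAt ℝ f z) :
    wdz (fun w => c * f w) z = c * wdz f z := by
  rw [wdz, wdz, fderiv_const_mul hf]
  simp
  ring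

/-- The Lawson-type correspondence of Daniel, on the level of fundamental data:
if `H₁` is constant, `κ₂ − 4τ₂² = κ₁ − 4τ₁²` and `e^{−iα}(H₁ − iτ₁) = H₂ − iτ₂`, then
`(λ, u, H₂, e^{iα}p, e^{iα}A)` is a fundamental data set for `(κ₂, τ₂)`. -/
theorem stmt_4 (κ₁ τ₁ κ₂ τ₂ H₁ H₂ α : ℝ) (h1 : κ₁ - 4 * τ₁ ^ 2 ≠ 0)
    (hk : κ₂ - 4 * τ₂ ^ 2 = κ₁ - 4 * τ₁ ^ 2)
    (hα : Complex.exp (-(Complex.I * α)) * ((H₁ : ℂ) - Complex.I * τ₁)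
      = (H₂ : ℂ) - Complex.I * τ₂)
    (Ω : Set ℂ) (hΩ : IsOpen Ω) (lam u : ℂ → ℝ) (p A : ℂ → ℂ)
    (h : IsFundData κ₁ τ₁ Ω lam u (fun _ => H₁) p A) :
    IsFundData κ₂ τ₂ Ω lam u (fun _ => H₂)
      (fun z => Complex.exp (Complex.I * α) * p z)
      (fun z => Complex.exp (Complex.I * α) * A z) := by
  set e : ℂ := Complex.exp (Complex.I * α) with he
  have hee : e * Complex.exp (-(Complex.I * α)) = 1 := by
    rw [he, ← Complex.exp_add]; simp
  have hconj : (starRingEnd ℂ) (Complex.exp (-(Complex.I * α))) = e := by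
    rw [he, ← Complex.exp_conj]
    congr 1
    simp [Complex.conj_I]
  have h1' : (H₁ : ℂ) - Complex.I * τ₁ = e * ((H₂ : ℂ) - Complex.I * τ₂) := by
    rw [← hα, ← mul_assoc, hee, one_mul]
  have h2' : (H₂ : ℂ) + Complex.I * τ₂ = e * ((H₁ : ℂ) + Complex.I * τ₁) := by
    have := congrArg (starRingEnd ℂ) hα
    simp only [map_mul, map_sub, hconj, Complex.conj_ofReal, map_mul, Complex.conj_I] at this
    linear_combination -this
  have hpdiff : ∀ z ∈ Ω, DifferentiableAt ℝ p z := fun z hz =>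
    (h.smooth_p.contDiffAt (hΩ.mem_nhds hz)).differentiableAt (by simp)
  have hAdiff : ∀ z ∈ Ω, DifferentiableAt ℝ A z := fun z hz =>
    (h.smooth_A.contDiffAt (hΩ.mem_nhds hz)).differentiableAt (by simp)
  constructor
  · exact h.smooth_lam
  · exact h.smooth_u
  · exact contDiffOn_const
  · exact (contDiffOn_const).mul h.smooth_p
  · exact (contDiffOn_const).mul h.smooth_A
  · exact h.lam_pos
  · intro z hz
    have hkC : (κ₂ : ℂ) - 4 * (τ₂ : ℂ) ^ 2 = (κ₁ : ℂ) - 4 * (τ₁ : ℂ) ^ 2 := by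
      exact_mod_cast congrArg (Complex.ofReal) hk
    rw [wdzbar_const_mul _ _ _ (hpdiff z hz), h.c1 z hz, wdz_const, wdz_const, hkC]
    ring
  · intro z hz
    rw [wdzbar_const_mul _ _ _ (hAdiff z hz), h.c2 z hz, h2']
    ring
  · intro z hz
    have := h.c3 z hz
    rw [this, h1']
    have hconjE : (starRingEnd ℂ) e = Complex.exp (-(Complex.I * α)) := by
      rw [he, ← Complex.exp_conj]
      congr 1
      simp [Complex.conj_I]
    rw [map_mul, hconjE]
    linear_combination (2 * p z / (lam z : ℂ) * (starRingEnd ℂ) (A z)) * hee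
  · intro z hz
    have habs : ‖e‖ = 1 := by rw [he]; simp [Complex.norm_exp]
    rw [norm_mul, habs, one_mul]
    exact h.c4 z hz
end

section
/- (Helicoidal mate on the level of fundamental data.) Let κ, τ be real constants with κ − 4τ² ≠ 0, let I ⊆ ℝ be an open interval, and let Ω = {z ∈ ℂ : Re z ∈ I}. Suppose (λ, u, H, p, A) is a fundamental data set on Ω for (κ, τ) such that all five functions depend only on Re z, i.e., there are smooth λ₀, u₀, H₀ : I → ℝ and p₀, A₀ : I → ℂ with λ(z) = λ₀(Re z), u(z) = u₀(Re z), H(z) = H₀(Re z), p(z) = p₀(Re z), A(z) = A₀(Re z). Then (λ, u, −H, −conj(p), −conj(A)) is also a fundamental data set on Ω for the same (κ, τ). -/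
open Complex

lemma wdz_neg (f : ℂ → ℂ) (z : ℂ) : wdz (fun w => -f w) z = -wdz f z := by
  unfold wdz; rw [fderiv_fun_neg]; simp; ring

lemma wdzbar_neg (f : ℂ → ℂ) (z : ℂ) : wdzbar (fun w => -f w) z = -wdzbar f z := by
  unfold wdzbar; rw [fderiv_fun_neg]; simp; ring

lemma fderiv_conj_apply (f : ℂ → ℂ) (z : ℂ) (hf : DifferentiableAt ℝ f z) (v : ℂ) :
    fderiv ℝ (fun w => (starRingEnd ℂ) (f w)) z v = (starRingEnd ℂ) (fderiv ℝ f z v) := by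
  have h2 := (Complex.conjCLE.toContinuousLinearMap.hasFDerivAt (x := f z)).comp z hf.hasFDerivAt
  have hfun : (⇑Complex.conjCLE.toContinuousLinearMap ∘ f) = fun w => (starRingEnd ℂ) (f w) := by
    ext w; simp [Complex.conjCLE]
  rw [hfun] at h2
  rw [h2.fderiv]
  simp [Complex.conjCLE]

lemma wdzbar_conj (f : ℂ → ℂ) (z : ℂ) (hf : DifferentiableAt ℝ f z) :
    wdzbar (fun w => (starRingEnd ℂ) (f w)) z = (starRingEnd ℂ) (wdz f z) := by
  unfold wdz wdzbar
  rw [fderiv_conj_apply f z hf, fderiv_conj_apply f z hf]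
  simp [map_sub, map_mul, map_div₀, map_ofNat]

lemma wdz_conj (f : ℂ → ℂ) (z : ℂ) (hf : DifferentiableAt ℝ f z) :
    wdz (fun w => (starRingEnd ℂ) (f w)) z = (starRingEnd ℂ) (wdzbar f z) := by
  unfold wdz wdzbar
  rw [fderiv_conj_apply f z hf, fderiv_conj_apply f z hf]
  simp [map_sub, map_mul, map_div₀, map_ofNat]
  ring

lemma fderivI_zero (f : ℂ → ℂ) (f0 : ℝ → ℂ) (z : ℂ) (hd : DifferentiableAt ℝ f0 z.re)
    (hloc : ∀ᶠ w in nhds z, f w = f0 w.re) : fderiv ℝ f z Complex.I = 0 := by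
  rw [Filter.EventuallyEq.fderiv_eq hloc]
  have h2 := hd.hasFDerivAt.comp z Complex.reCLM.hasFDerivAt
  have h3 : HasFDerivAt (fun w : ℂ => f0 w.re) ((fderiv ℝ f0 z.re).comp Complex.reCLM) z := h2
  rw [h3.fderiv]
  simp

lemma wdz_eq_wdzbar (f : ℂ → ℂ) (z : ℂ) (hI : fderiv ℝ f z Complex.I = 0) :
    wdz f z = wdzbar f z := by
  unfold wdz wdzbar; rw [hI]; ring

lemma fderiv_ofReal_conj (g : ℂ → ℝ) (z : ℂ) (hg : DifferentiableAt ℝ g z) (v : ℂ) :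
    (starRingEnd ℂ) (fderiv ℝ (fun w => (g w : ℂ)) z v) = fderiv ℝ (fun w => (g w : ℂ)) z v := by
  have h2 := (Complex.ofRealCLM.hasFDerivAt (x := g z)).comp z hg.hasFDerivAt
  have hfun : (⇑Complex.ofRealCLM ∘ g) = fun w => ((g w : ℝ) : ℂ) := rfl
  rw [hfun] at h2
  rw [h2.fderiv]
  simp [Complex.conj_ofReal]

lemma conj_wdz_real (g : ℂ → ℝ) (z : ℂ) (hg : DifferentiableAt ℝ g z)
    (hI : fderiv ℝ (fun w => (g w : ℂ)) z Complex.I = 0) :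
    (starRingEnd ℂ) (wdz (fun w => (g w : ℂ)) z) = wdz (fun w => (g w : ℂ)) z := by
  unfold wdz
  rw [hI]
  simp [map_sub, map_div₀, map_mul, map_ofNat, fderiv_ofReal_conj g z hg]

/-- The helicoidal mate, on the level of fundamental data: if a fundamental data set
for `(κ, τ)` on the strip `{Re z ∈ I}` depends only on `Re z`, then
`(λ, u, −H, −p̄, −Ā)` is also a fundamental data set for the same `(κ, τ)` there. -/
theorem stmt_7 (κ τ : ℝ) (hκτ : κ - 4 * τ ^ 2 ≠ 0) (I : Set ℝ) (hIopen : IsOpen I)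
    (hIconn : I.OrdConnected) (hIne : I.Nonempty)
    (lam u H : ℂ → ℝ) (p A : ℂ → ℂ)
    (lam0 u0 H0 : ℝ → ℝ) (p0 A0 : ℝ → ℂ)
    (hlam0 : ContDiffOn ℝ (⊤ : ℕ∞) lam0 I) (hu0 : ContDiffOn ℝ (⊤ : ℕ∞) u0 I)
    (hH0 : ContDiffOn ℝ (⊤ : ℕ∞) H0 I) (hp0 : ContDiffOn ℝ (⊤ : ℕ∞) p0 I)
    (hA0 : ContDiffOn ℝ (⊤ : ℕ∞) A0 I)
    (hlam : ∀ z : ℂ, z.re ∈ I → lam z = lam0 z.re)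
    (hu : ∀ z : ℂ, z.re ∈ I → u z = u0 z.re)
    (hH : ∀ z : ℂ, z.re ∈ I → H z = H0 z.re)
    (hp : ∀ z : ℂ, z.re ∈ I → p z = p0 z.re)
    (hA : ∀ z : ℂ, z.re ∈ I → A z = A0 z.re)
    (h : IsFundData κ τ {z : ℂ | z.re ∈ I} lam u H p A) :
    IsFundData κ τ {z : ℂ | z.re ∈ I} lam u (fun z => -H z)
      (fun z => -(starRingEnd ℂ) (p z)) (fun z => -(starRingEnd ℂ) (A z)) := by

  have hΩ : IsOpen {z : ℂ | z.re ∈ I} := hIopen.preimage Complex.continuous_re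
  have hdI : ∀ (f : ℂ → ℂ) (f0 : ℝ → ℂ), ContDiffOn ℝ (⊤ : ℕ∞) f0 I →
      (∀ z : ℂ, z.re ∈ I → f z = f0 z.re) →
      ∀ z ∈ {z : ℂ | z.re ∈ I}, fderiv ℝ f z Complex.I = 0 := by
    intro f f0 hs hf z hz
    exact fderivI_zero f f0 z ((hs.contDiffAt (hIopen.mem_nhds hz)).differentiableAt (by simp))
      (Filter.eventually_of_mem (hΩ.mem_nhds hz) (fun w hw => hf w hw))
  have hpI := hdI p p0 hp0 hp
  have hAI := hdI A A0 hA0 hA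
  have hHI := hdI (fun w => (H w : ℂ)) (fun x => (H0 x : ℂ))
    (Complex.ofRealCLM.contDiff.comp_contDiffOn hH0) (fun z hz => congrArg Complex.ofReal (hH z hz))
  have huI := hdI (fun w => (u w : ℂ)) (fun x => (u0 x : ℂ))
    (Complex.ofRealCLM.contDiff.comp_contDiffOn hu0) (fun z hz => congrArg Complex.ofReal (hu z hz))
  have hdp : ∀ z ∈ {z : ℂ | z.re ∈ I}, DifferentiableAt ℝ p z := fun z hz =>
    (h.smooth_p.contDiffAt (hΩ.mem_nhds hz)).differentiableAt (by simp)
  have hdA : ∀ z ∈ {z : ℂ | z.re ∈ I}, DifferentiableAt ℝ A z := fun z hz =>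
    (h.smooth_A.contDiffAt (hΩ.mem_nhds hz)).differentiableAt (by simp)
  have hdH : ∀ z ∈ {z : ℂ | z.re ∈ I}, DifferentiableAt ℝ H z := fun z hz =>
    (h.smooth_H.contDiffAt (hΩ.mem_nhds hz)).differentiableAt (by simp)
  have hdu : ∀ z ∈ {z : ℂ | z.re ∈ I}, DifferentiableAt ℝ u z := fun z hz =>
    (h.smooth_u.contDiffAt (hΩ.mem_nhds hz)).differentiableAt (by simp)
  have hHconj : ∀ z ∈ {z : ℂ | z.re ∈ I},
      (starRingEnd ℂ) (wdz (fun w => (H w : ℂ)) z) = wdz (fun w => (H w : ℂ)) z :=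
    fun z hz => conj_wdz_real H z (hdH z hz) (hHI z hz)
  have huconj : ∀ z ∈ {z : ℂ | z.re ∈ I},
      (starRingEnd ℂ) (wdz (fun w => (u w : ℂ)) z) = wdz (fun w => (u w : ℂ)) z :=
    fun z hz => conj_wdz_real u z (hdu z hz) (huI z hz)
  refine ⟨h.smooth_lam, h.smooth_u, h.smooth_H.neg,
    (Complex.conjCLE.contDiff.comp_contDiffOn h.smooth_p).neg,
    (Complex.conjCLE.contDiff.comp_contDiffOn h.smooth_A).neg,
    h.lam_pos, ?_, ?_, ?_, ?_⟩
  · -- c1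
    intro z hz
    have hnegH : (fun w : ℂ => (((-H w : ℝ)) : ℂ)) = fun w => -((H w : ℝ) : ℂ) := by
      ext w; push_cast; ring
    rw [wdzbar_neg, wdzbar_conj p z (hdp z hz), wdz_eq_wdzbar p z (hpI z hz), h.c1 z hz,
      hnegH, wdz_neg]
    simp only [map_mul, map_add, map_sub, map_div₀, map_ofNat, Complex.conj_ofReal,
      map_pow, hHconj z hz]
    ring
  · -- c2
    intro z hz
    rw [wdzbar_neg, wdzbar_conj A z (hdA z hz), wdz_eq_wdzbar A z (hAI z hz), h.c2 z hz]
    simp only [map_mul, map_add, map_div₀, map_ofNat, Complex.conj_ofReal, Complex.conj_I]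
    push_cast
    ring
  · -- c3
    intro z hz
    calc wdz (fun w => (u w : ℂ)) z
        = (starRingEnd ℂ) (wdz (fun w => (u w : ℂ)) z) := (huconj z hz).symm
      _ = (starRingEnd ℂ) (-((H z : ℂ) - Complex.I * (τ : ℂ)) * A z
            - (2 * p z / (lam z : ℂ)) * (starRingEnd ℂ) (A z)) := by rw [h.c3 z hz]
      _ = _ := by
          simp only [map_mul, map_sub, map_neg, map_div₀, map_ofNat, Complex.conj_ofReal,
            Complex.conj_I, Complex.conj_conj]
          push_cast
          ring
  · -- c4
    intro z hz
    have h4 := h.c4 z hz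
    simpa using h4
end
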